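/- With the notation below, suppose b_0+b_2 ≢ b_1+b_3 (mod 2). Then: (1) if (b_0b_2+b_1b_3, c_0c_2+c_1c_3) ≡ (0,0) or (2,2) (mod 4), then D_4(b)·D_4(c) = (8k+1)(8l+1) for some integers k ≡ l (mod 2); (2) if (b_0b_2+b_1b_3, c_0c_2+c_1c_3) ≡ (0,2) or (2,0) (mod 4), then D_4(b)·D_4(c) = (8k+1)(8l+1) for some integers k ≢ l (mod 2); (3) if (b_0b_2+b_1b_3, c_0c_2+c_1c_3) ≡ (1,1) or (−1,−1) (mod 4), then D_4(b)·D_4(c) = (8k−3)(8l−3) for some integers k ≡ l (mod 2); (4) if (b_0b_2+b_1b_3, c_0c_2+c_1c_3) ≡ (1,−1) or (−1,1) (mod 4), then D_4(b)·D_4(c) = (8k−3)(8l−3) for some integers k ≢ l (mod 2). -/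

import Mathlib

/-!
The circulant determinant factors as
`D₄(x) = ((x₀+x₂)² - (x₁+x₃)²)((x₀-x₂)² + (x₁-x₃)²)`. When `x₀+x₂` is odd and `x₁+x₃` even,
the odd squares are `1 mod 8` and the even ones `0 mod 4`, which gives
`D₄(x) ≡ 1 - 4(x₀x₂ + x₁x₃) (mod 16)`; in the opposite parity case the same holds for `-D₄(x)`,
since rotating the first row negates the determinant. As `bᵢ ≡ cᵢ (mod 2)`, the same sign occurs
for `b` and `c` and cancels in the product. Finally `D ≡ 1 - 4s (mod 16)` means `D = 8k + 1` with
`2k ≡ -s (mod 4)` for even `s`, and `D = 8k - 3` with `2k ≡ 1 - s (mod 4)` for odd `s`, so the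
parities of the two `k`s agree exactly when `s ≡ t (mod 4)`.
-/

open Matrix Complex

def D4 (x0 x1 x2 x3 : ℤ) : ℤ :=
  (Matrix.of ![![x0, x1, x2, x3], ![x3, x0, x1, x2], ![x2, x3, x0, x1], ![x1, x2, x3, x0]]).det

def bI (a : ℕ → ℤ) (i : ℕ) : ℤ := (a i + a (i + 8)) + (a (i + 4) + a (i + 12))

def cI (a : ℕ → ℤ) (i : ℕ) : ℤ := (a i + a (i + 8)) - (a (i + 4) + a (i + 12))

lemma D4_eq_mul (x0 x1 x2 x3 : ℤ) :
    D4 x0 x1 x2 x3 = ((x0 + x2) ^ 2 - (x1 + x3) ^ 2) * ((x0 - x2) ^ 2 + (x1 - x3) ^ 2) := by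
  simp [D4, Matrix.det_succ_row_zero, Fin.sum_univ_succ, Fin.succAbove]
  ring

lemma D4_rotate (x0 x1 x2 x3 : ℤ) : D4 x1 x2 x3 x0 = -D4 x0 x1 x2 x3 := by
  rw [D4_eq_mul, D4_eq_mul]
  ring

lemma D4_modEq_of_odd_of_even {x0 x1 x2 x3 : ℤ} (h02 : Odd (x0 + x2)) (h13 : Even (x1 + x3)) :
    D4 x0 x1 x2 x3 ≡ 1 - 4 * (x0 * x2 + x1 * x3) [ZMOD 16] := by
  have four_dvd_sq {x : ℤ} (hx : Even x) : 4 ∣ x ^ 2 :=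
    pow_dvd_pow_of_dvd (even_iff_two_dvd.mp hx) 2
  obtain ⟨α, hα⟩ := Int.eight_dvd_sq_sub_one_of_odd h02
  obtain ⟨β, hβ⟩ := Int.eight_dvd_sq_sub_one_of_odd (k := x0 - x2) (by
    rw [show x0 - x2 = x0 + x2 - 2 * x2 by ring]; exact h02.sub_even (even_two_mul x2))
  obtain ⟨γ, hγ⟩ := four_dvd_sq h13
  obtain ⟨δ, hδ⟩ := four_dvd_sq (x := x1 - x3) (by
    rw [show x1 - x3 = x1 + x3 - 2 * x3 by ring]; exact h13.sub (even_two_mul x3))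
  -- `4(x₀x₂ + x₁x₃) = (x₀+x₂)² - (x₀-x₂)² + (x₁+x₃)² - (x₁-x₃)²`, so everything is a polynomial
  -- in `α, β, γ, δ`, and the difference has only terms divisible by 16.
  refine Int.modEq_iff_dvd.2 ⟨-(α + 4 * α * β + 2 * α * δ - 2 * β * γ - γ * δ), ?_⟩
  rw [D4_eq_mul]
  linear_combination (-1 - (x0 - x2) ^ 2 - (x1 - x3) ^ 2) * hα + ((x1 + x3) ^ 2 - 8 * α) * hβ
    + (8 * β + (x1 - x3) ^ 2) * hγ + (4 * γ - 8 * α) * hδ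

lemma neg_D4_modEq_of_even_of_odd {x0 x1 x2 x3 : ℤ} (h02 : Even (x0 + x2)) (h13 : Odd (x1 + x3)) :
    -D4 x0 x1 x2 x3 ≡ 1 - 4 * (x0 * x2 + x1 * x3) [ZMOD 16] := by
  rw [← D4_rotate, show x0 * x2 + x1 * x3 = x1 * x3 + x2 * x0 by ring]
  exact D4_modEq_of_odd_of_even h13 (by rwa [add_comm])

lemma exists_mul_eq_eight_mul_add_one_mul {D E s t : ℤ} (hD : D ≡ 1 - 4 * s [ZMOD 16])
    (hE : E ≡ 1 - 4 * t [ZMOD 16]) (hs : Even s) (ht : Even t) :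
    ∃ k l : ℤ, (k ≡ l [ZMOD 2] ↔ s ≡ t [ZMOD 4]) ∧ D * E = (8 * k + 1) * (8 * l + 1) := by
  rw [Int.even_iff] at hs ht
  unfold Int.ModEq at *
  refine ⟨(D - 1) / 8, (E - 1) / 8, by omega, ?_⟩
  rw [show 8 * ((D - 1) / 8) + 1 = D by omega, show 8 * ((E - 1) / 8) + 1 = E by omega]

lemma exists_mul_eq_eight_mul_sub_three_mul {D E s t : ℤ} (hD : D ≡ 1 - 4 * s [ZMOD 16])
    (hE : E ≡ 1 - 4 * t [ZMOD 16]) (hs : Odd s) (ht : Odd t) :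
    ∃ k l : ℤ, (k ≡ l [ZMOD 2] ↔ s ≡ t [ZMOD 4]) ∧ D * E = (8 * k - 3) * (8 * l - 3) := by
  rw [Int.odd_iff] at hs ht
  unfold Int.ModEq at *
  refine ⟨(D + 3) / 8, (E + 3) / 8, by omega, ?_⟩
  rw [show 8 * ((D + 3) / 8) - 3 = D by omega, show 8 * ((E + 3) / 8) - 3 = E by omega]

lemma mul_eq_of_modEq_one_sub_four_mul {D E s t : ℤ} (hD : D ≡ 1 - 4 * s [ZMOD 16])
    (hE : E ≡ 1 - 4 * t [ZMOD 16]) :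
    (((s ≡ 0 [ZMOD 4] ∧ t ≡ 0 [ZMOD 4]) ∨ (s ≡ 2 [ZMOD 4] ∧ t ≡ 2 [ZMOD 4])) →
      ∃ k l : ℤ, k ≡ l [ZMOD 2] ∧ D * E = (8 * k + 1) * (8 * l + 1)) ∧
    (((s ≡ 0 [ZMOD 4] ∧ t ≡ 2 [ZMOD 4]) ∨ (s ≡ 2 [ZMOD 4] ∧ t ≡ 0 [ZMOD 4])) →
      ∃ k l : ℤ, ¬ (k ≡ l [ZMOD 2]) ∧ D * E = (8 * k + 1) * (8 * l + 1)) ∧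
    (((s ≡ 1 [ZMOD 4] ∧ t ≡ 1 [ZMOD 4]) ∨ (s ≡ -1 [ZMOD 4] ∧ t ≡ -1 [ZMOD 4])) →
      ∃ k l : ℤ, k ≡ l [ZMOD 2] ∧ D * E = (8 * k - 3) * (8 * l - 3)) ∧
    (((s ≡ 1 [ZMOD 4] ∧ t ≡ -1 [ZMOD 4]) ∨ (s ≡ -1 [ZMOD 4] ∧ t ≡ 1 [ZMOD 4])) →
      ∃ k l : ℤ, ¬ (k ≡ l [ZMOD 2]) ∧ D * E = (8 * k - 3) * (8 * l - 3)) := by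
  refine ⟨fun hst => ?_, fun hst => ?_, fun hst => ?_, fun hst => ?_⟩ <;>
    simp only [Int.ModEq] at hst
  · obtain ⟨k, l, hkl, hDE⟩ := exists_mul_eq_eight_mul_add_one_mul hD hE
      (Int.even_iff.2 (by omega)) (Int.even_iff.2 (by omega))
    exact ⟨k, l, hkl.2 (by unfold Int.ModEq; omega), hDE⟩
  · obtain ⟨k, l, hkl, hDE⟩ := exists_mul_eq_eight_mul_add_one_mul hD hE
      (Int.even_iff.2 (by omega)) (Int.even_iff.2 (by omega))
    exact ⟨k, l, mt hkl.1 (by unfold Int.ModEq; omega), hDE⟩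
  · obtain ⟨k, l, hkl, hDE⟩ := exists_mul_eq_eight_mul_sub_three_mul hD hE
      (Int.odd_iff.2 (by omega)) (Int.odd_iff.2 (by omega))
    exact ⟨k, l, hkl.2 (by unfold Int.ModEq; omega), hDE⟩
  · obtain ⟨k, l, hkl, hDE⟩ := exists_mul_eq_eight_mul_sub_three_mul hD hE
      (Int.odd_iff.2 (by omega)) (Int.odd_iff.2 (by omega))
    exact ⟨k, l, mt hkl.1 (by unfold Int.ModEq; omega), hDE⟩

theorem stmt9 (a : ℕ → ℤ)
    (h : ¬ (bI a 0 + bI a 2 ≡ bI a 1 + bI a 3 [ZMOD 2])) :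
    (((bI a 0 * bI a 2 + bI a 1 * bI a 3 ≡ 0 [ZMOD 4] ∧
        cI a 0 * cI a 2 + cI a 1 * cI a 3 ≡ 0 [ZMOD 4]) ∨
      (bI a 0 * bI a 2 + bI a 1 * bI a 3 ≡ 2 [ZMOD 4] ∧
        cI a 0 * cI a 2 + cI a 1 * cI a 3 ≡ 2 [ZMOD 4])) →
      ∃ k l : ℤ, k ≡ l [ZMOD 2] ∧
        D4 (bI a 0) (bI a 1) (bI a 2) (bI a 3) * D4 (cI a 0) (cI a 1) (cI a 2) (cI a 3) =
          (8 * k + 1) * (8 * l + 1)) ∧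
    (((bI a 0 * bI a 2 + bI a 1 * bI a 3 ≡ 0 [ZMOD 4] ∧
        cI a 0 * cI a 2 + cI a 1 * cI a 3 ≡ 2 [ZMOD 4]) ∨
      (bI a 0 * bI a 2 + bI a 1 * bI a 3 ≡ 2 [ZMOD 4] ∧
        cI a 0 * cI a 2 + cI a 1 * cI a 3 ≡ 0 [ZMOD 4])) →
      ∃ k l : ℤ, ¬ (k ≡ l [ZMOD 2]) ∧
        D4 (bI a 0) (bI a 1) (bI a 2) (bI a 3) * D4 (cI a 0) (cI a 1) (cI a 2) (cI a 3) =
          (8 * k + 1) * (8 * l + 1)) ∧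
    (((bI a 0 * bI a 2 + bI a 1 * bI a 3 ≡ 1 [ZMOD 4] ∧
        cI a 0 * cI a 2 + cI a 1 * cI a 3 ≡ 1 [ZMOD 4]) ∨
      (bI a 0 * bI a 2 + bI a 1 * bI a 3 ≡ -1 [ZMOD 4] ∧
        cI a 0 * cI a 2 + cI a 1 * cI a 3 ≡ -1 [ZMOD 4])) →
      ∃ k l : ℤ, k ≡ l [ZMOD 2] ∧
        D4 (bI a 0) (bI a 1) (bI a 2) (bI a 3) * D4 (cI a 0) (cI a 1) (cI a 2) (cI a 3) =
          (8 * k - 3) * (8 * l - 3)) ∧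
    (((bI a 0 * bI a 2 + bI a 1 * bI a 3 ≡ 1 [ZMOD 4] ∧
        cI a 0 * cI a 2 + cI a 1 * cI a 3 ≡ -1 [ZMOD 4]) ∨
      (bI a 0 * bI a 2 + bI a 1 * bI a 3 ≡ -1 [ZMOD 4] ∧
        cI a 0 * cI a 2 + cI a 1 * cI a 3 ≡ 1 [ZMOD 4])) →
      ∃ k l : ℤ, ¬ (k ≡ l [ZMOD 2]) ∧
        D4 (bI a 0) (bI a 1) (bI a 2) (bI a 3) * D4 (cI a 0) (cI a 1) (cI a 2) (cI a 3) =
          (8 * k - 3) * (8 * l - 3)) := by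
  have hbc (i : ℕ) : bI a i ≡ cI a i [ZMOD 2] := by unfold bI cI Int.ModEq; omega
  have h02 : bI a 0 + bI a 2 ≡ cI a 0 + cI a 2 [ZMOD 2] := (hbc 0).add (hbc 2)
  have h13 : bI a 1 + bI a 3 ≡ cI a 1 + cI a 3 [ZMOD 2] := (hbc 1).add (hbc 3)
  unfold Int.ModEq at h h02 h13
  rcases Int.emod_two_eq_zero_or_one (bI a 0 + bI a 2) with hb02 | hb02
  · have hb := neg_D4_modEq_of_even_of_odd (x1 := bI a 1) (x3 := bI a 3)
      (Int.even_iff.2 hb02) (Int.odd_iff.2 (by omega))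
    have hc := neg_D4_modEq_of_even_of_odd (x0 := cI a 0) (x1 := cI a 1) (x2 := cI a 2)
      (x3 := cI a 3) (Int.even_iff.2 (by omega)) (Int.odd_iff.2 (by omega))
    simpa only [neg_mul_neg] using mul_eq_of_modEq_one_sub_four_mul hb hc
  · have hb := D4_modEq_of_odd_of_even (x1 := bI a 1) (x3 := bI a 3)
      (Int.odd_iff.2 hb02) (Int.even_iff.2 (by omega))
    have hc := D4_modEq_of_odd_of_even (x0 := cI a 0) (x1 := cI a 1) (x2 := cI a 2)
      (x3 := cI a 3) (Int.odd_iff.2 (by omega)) (Int.even_iff.2 (by omega))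
    exact mul_eq_of_modEq_one_sub_four_mul hb hc
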